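/- arXiv:1307.0664 — 6 statements merged into one kernel-verified Lean document; each statement's English description precedes it below -/
import Mathlib

section
/- Let U, V, W be real intervals, A : (U+V) × W → ℝ and B : U × (V+W) → ℝ functions such that A(u+v, w) = B(u, v+w) for all u ∈ U, v ∈ V, w ∈ W. Then there exists φ : U+V+W → ℝ such that A(p, q) = φ(p+q) for all p ∈ U+V, q ∈ W, and B(t, s) = φ(t+s) for all t ∈ U, s ∈ V+W. -/
open Pointwise Set

/-- Associativity equation (Corollary, Maksa). -/
theorem stmt_1 (U V W : Set ℝ)
    (hU : U.OrdConnected) (hV : V.OrdConnected) (hW : W.OrdConnected)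
    (hUne : ∃ a ∈ U, ∃ b ∈ U, a < b)
    (hVne : ∃ a ∈ V, ∃ b ∈ V, a < b)
    (hWne : ∃ a ∈ W, ∃ b ∈ W, a < b)
    (A B : ℝ → ℝ → ℝ)
    (h : ∀ u ∈ U, ∀ v ∈ V, ∀ w ∈ W, A (u + v) w = B u (v + w)) :
    ∃ φ : ℝ → ℝ,
      (∀ p ∈ U + V, ∀ q ∈ W, A p q = φ (p + q)) ∧
      (∀ t ∈ U, ∀ s ∈ V + W, B t s = φ (t + s)) := by
  classical
  obtain ⟨a, haV, b, hbV, hab⟩ := hVne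
  set η : ℝ := (b - a) / 2 with hηdef
  have hη : 0 < η := by simp [hηdef]; linarith
  -- U+V is order connected
  have hUV : ∀ y z c : ℝ, y ∈ U + V → z ∈ U + V → y ≤ c → c ≤ z → c ∈ U + V := by
    intro y z c hy hz hyc hcz
    obtain ⟨u1, hu1, v1, hv1, huv1⟩ := Set.mem_add.1 hy
    obtain ⟨u2, hu2, v2, hv2, huv2⟩ := Set.mem_add.1 hz
    by_cases hc : c - u1 ≤ v2
    · exact Set.mem_add.2 ⟨u1, hu1, c - u1, hV.out hv1 hv2 ⟨by linarith, hc⟩, by ring⟩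
    · exact Set.mem_add.2 ⟨c - v2, hU.out hu1 hu2 ⟨by linarith, by linarith⟩,
        v2, hv2, by ring⟩
  -- single small step
  have step : ∀ x q q' : ℝ, q ∈ W → q' ∈ W → x - q ∈ U + V → x - q' ∈ U + V →
      q ≤ q' → q' - q ≤ η → A (x - q) q = A (x - q') q' := by
    intro x q q' hq hq' hxq hxq' hle hsmall
    set t : ℝ := q' - q with htdef
    have ht0 : 0 ≤ t := by linarith
    obtain ⟨u', hu', v', hv', huv'⟩ := Set.mem_add.1 hxq'
    by_cases h1 : v' + t ∈ V
    · have e1 : x - q = u' + (v' + t) := by linarith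
      have e2 : (v' + t) + q = v' + q' := by linarith
      calc A (x - q) q = A (u' + (v' + t)) q := by rw [e1]
        _ = B u' ((v' + t) + q) := h u' hu' (v' + t) h1 q hq
        _ = B u' (v' + q') := by rw [e2]
        _ = A (u' + v') q' := (h u' hu' v' hv' q' hq').symm
        _ = A (x - q') q' := by rw [huv']
    · -- then v' - t ∈ V
      have hv'a : a + t ≤ v' := by
        by_contra hcon
        push_neg at hcon
        exact h1 (hV.out hv' hbV ⟨by linarith, by linarith⟩)
      have hvmt : v' - t ∈ V := hV.out haV hv' ⟨by linarith, by linarith⟩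
      obtain ⟨u3, hu3, v3, hv3, huv3⟩ := Set.mem_add.1 hxq
      by_cases h2 : v' ≤ v3
      · have hv3t : v3 - t ∈ V := hV.out hvmt hv3 ⟨by linarith, by linarith⟩
        have e2 : v3 + q = (v3 - t) + q' := by linarith
        have e3 : u3 + (v3 - t) = x - q' := by linarith
        calc A (x - q) q = A (u3 + v3) q := by rw [huv3]
          _ = B u3 (v3 + q) := h u3 hu3 v3 hv3 q hq
          _ = B u3 ((v3 - t) + q') := by rw [e2]
          _ = A (u3 + (v3 - t)) q' := (h u3 hu3 (v3 - t) hv3t q' hq').symm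
          _ = A (x - q') q' := by rw [e3]
      · push_neg at h2
        have hu't : u' + t ∈ U := hU.out hu' hu3 ⟨by linarith, by linarith⟩
        have e1 : x - q = (u' + t) + v' := by linarith
        have e2 : v' + q = (v' - t) + q' := by linarith
        have e3 : (u' + t) + (v' - t) = x - q' := by linarith
        calc A (x - q) q = A ((u' + t) + v') q := by rw [e1]
          _ = B (u' + t) (v' + q) := h (u' + t) hu't v' hv' q hq
          _ = B (u' + t) ((v' - t) + q') := by rw [e2]
          _ = A ((u' + t) + (v' - t)) q' := (h (u' + t) hu't (v' - t) hvmt q' hq').symm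
          _ = A (x - q') q' := by rw [e3]
  -- chain of steps
  have chain : ∀ n : ℕ, ∀ x q q' : ℝ, q ∈ W → q' ∈ W → x - q ∈ U + V → x - q' ∈ U + V →
      q ≤ q' → q' - q ≤ n * η → A (x - q) q = A (x - q') q' := by
    intro n
    induction n with
    | zero =>
      intro x q q' _ _ _ _ hle hb
      have : q = q' := by simp at hb; linarith
      rw [this]
    | succ n ih =>
      intro x q q' hq hq' hxq hxq' hle hb
      by_cases hsm : q' - q ≤ η
      · exact step x q q' hq hq' hxq hxq' hle hsm
      · push_neg at hsm
        set q'' : ℝ := q' - η with hq''def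
        have hq''W : q'' ∈ W := hW.out hq hq' ⟨by linarith, by linarith⟩
        have hxq'' : x - q'' ∈ U + V :=
          hUV (x - q') (x - q) (x - q'') hxq' hxq (by linarith) (by linarith)
        have e1 : A (x - q) q = A (x - q'') q'' := by
          apply ih x q q'' hq hq''W hxq hxq'' (by linarith)
          push_cast [Nat.cast_succ] at hb ⊢
          linarith
        rw [e1]
        exact step x q'' q' hq''W hq' hxq'' hxq' (by linarith) (by linarith)
  -- well-definedness
  have key : ∀ x q q' : ℝ, q ∈ W → q' ∈ W → x - q ∈ U + V → x - q' ∈ U + V →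
      A (x - q) q = A (x - q') q' := by
    have key' : ∀ x q q' : ℝ, q ∈ W → q' ∈ W → x - q ∈ U + V → x - q' ∈ U + V →
        q ≤ q' → A (x - q) q = A (x - q') q' := by
      intro x q q' hq hq' hxq hxq' hle
      obtain ⟨n, hn⟩ := exists_nat_ge ((q' - q) / η)
      exact chain n x q q' hq hq' hxq hxq' hle
        (by rw [div_le_iff₀ hη] at hn; linarith)
    intro x q q' hq hq' hxq hxq'
    rcases le_total q q' with hle | hle
    · exact key' x q q' hq hq' hxq hxq' hle
    · exact (key' x q' q hq' hq hxq' hxq hle).symm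
  -- define φ
  refine ⟨fun x => if hx : ∃ q, q ∈ W ∧ x - q ∈ U + V then A (x - hx.choose) hx.choose
    else 0, ?_, ?_⟩
  · intro p hp q hq
    have hx : ∃ q', q' ∈ W ∧ (p + q) - q' ∈ U + V := ⟨q, hq, by simpa using hp⟩
    simp only [dif_pos hx]
    obtain ⟨hcW, hcUV⟩ := hx.choose_spec
    have := key (p + q) q hx.choose hq hcW (by simpa using hp) hcUV
    simpa using this
  · intro t ht s hs
    obtain ⟨v, hv, w, hw, hvw⟩ := Set.mem_add.1 hs
    have hpq : t + v ∈ U + V := Set.mem_add.2 ⟨t, ht, v, hv, rfl⟩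
    have hx : ∃ q', q' ∈ W ∧ (t + s) - q' ∈ U + V := ⟨w, hw, by
      have : t + s - w = t + v := by linarith
      rw [this]; exact hpq⟩
    simp only [dif_pos hx]
    obtain ⟨hcW, hcUV⟩ := hx.choose_spec
    have hB : B t s = A (t + v) w := by
      rw [← hvw]; exact (h t ht v hv w hw).symm
    have e : t + s - w = t + v := by linarith
    have := key (t + s) w hx.choose hw hcW (by rw [e]; exact hpq) hcUV
    rw [hB, ← e]
    exact this
end

section
/- Let α < 0, ε ≥ 0, and f : (0,1) → ℝ satisfy |f(x) + (1−x)^α f(y/(1−x)) − f(y) − (1−y)^α f(x/(1−y))| ≤ ε for all (x,y) with x, y, x+y ∈ (0,1). Then there exist a, b ∈ ℝ with f(x) = a x^α + b(1−x)^α − b for all x ∈ (0,1). Conversely, every function of this form satisfies the inequality (indeed with ε = 0). -/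
/-!
Homogenize `f` to `φ u v = (u + v) ^ α * f (u / (u + v))`, a function of degree `α` on pairs of
positive reals. The equation for `f` becomes the identity
`φ u (v + w) + φ v w = φ v (u + w) + φ u w`, and the hypothesis bounds its defect by
`ε * (u + v + w) ^ α`. The defect at `(y, z, r)` is a signed sum of five defects of total mass at
least `x`, for any `x > 0`; since `α < 0` these are `O(x ^ α) → 0`, so the identity holds exactly.

For a solution, `C x y = φ x (y + w) + φ y w - φ (x + y) w` does not depend on `w`, and is a
symmetric `2`-cocycle on `(0, ∞)`, homogeneous of degree `α`. As `ℝ` is divisible, the central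
extension it defines splits, so `C` is a coboundary, and homogeneity with `α ≠ 1` pins it down to a
multiple `g` of the coboundary of `x ^ α`. Then `φ u v - g * u ^ α` has vanishing cocycle, and
homogeneity with `α ≠ 0` forces it to be `b * (v ^ α - (u + v) ^ α)`.
-/

open Set Filter Topology
open scoped NNReal

structure PosSymmCocycle where
  toFun : ℝ → ℝ → ℝ
  symm : ∀ x y, 0 < x → 0 < y → toFun x y = toFun y x
  cocycle : ∀ x y z, 0 < x → 0 < y → 0 < z →
    toFun x y + toFun (x + y) z = toFun y z + toFun x (y + z)

namespace PosSymmCocycle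

variable (c : PosSymmCocycle)

/-- Extending by zero turns `c` into a normalized cocycle on the monoid `ℝ≥0`. -/
noncomputable def extendByZero (x y : ℝ≥0) : ℝ := if x = 0 ∨ y = 0 then 0 else c.toFun x y

lemma extendByZero_comm (x y : ℝ≥0) : c.extendByZero x y = c.extendByZero y x := by
  unfold extendByZero
  split_ifs with h₁ h₂ h₂
  · rfl
  · exact absurd h₁.symm h₂
  · exact absurd h₂.symm h₁
  · push Not at h₁
    exact c.symm _ _ (NNReal.coe_pos.2 (pos_iff_ne_zero.2 h₁.1))
      (NNReal.coe_pos.2 (pos_iff_ne_zero.2 h₁.2))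

lemma extendByZero_cocycle (x y z : ℝ≥0) :
    c.extendByZero x y + c.extendByZero (x + y) z =
      c.extendByZero y z + c.extendByZero x (y + z) := by
  rcases eq_or_ne x 0 with rfl | hx
  · simp [extendByZero]
  rcases eq_or_ne y 0 with rfl | hy
  · simp [extendByZero]
  rcases eq_or_ne z 0 with rfl | hz
  · simp [extendByZero]
  simpa [extendByZero, hx, hy, hz] using
    c.cocycle x y z (NNReal.coe_pos.2 (pos_iff_ne_zero.2 hx))
      (NNReal.coe_pos.2 (pos_iff_ne_zero.2 hy)) (NNReal.coe_pos.2 (pos_iff_ne_zero.2 hz))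

/-- The central extension of `ℝ≥0` by `ℝ` defined by `c`. -/
def Extension (_ : PosSymmCocycle) : Type := ℝ × ℝ≥0

namespace Extension

variable {c}

def mk (a : ℝ) (x : ℝ≥0) : c.Extension := (a, x)

noncomputable instance : Add c.Extension :=
  ⟨fun p q => .mk (p.1 + q.1 + c.extendByZero p.2 q.2) (p.2 + q.2)⟩

instance : Zero c.Extension := ⟨.mk 0 0⟩

lemma mk_add_mk (a b : ℝ) (x y : ℝ≥0) :
    (mk a x : c.Extension) + mk b y = mk (a + b + c.extendByZero x y) (x + y) := rfl

lemma add_fst (p q : c.Extension) : (p + q).1 = p.1 + q.1 + c.extendByZero p.2 q.2 := rfl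

lemma add_snd (p q : c.Extension) : (p + q).2 = p.2 + q.2 := rfl

lemma zero_fst : (0 : c.Extension).1 = 0 := rfl

lemma zero_snd : (0 : c.Extension).2 = 0 := rfl

noncomputable instance : AddCommMonoid c.Extension where
  add_assoc p q r := by
    refine Prod.ext ?_ (add_assoc p.2 q.2 r.2)
    simp only [add_fst, add_snd]
    linarith [c.extendByZero_cocycle p.2 q.2 r.2]
  zero_add p := by
    refine Prod.ext ?_ (zero_add p.2)
    simp [add_fst, zero_fst, zero_snd, extendByZero]
  add_zero p := by
    refine Prod.ext ?_ (add_zero p.2)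
    simp [add_fst, zero_fst, zero_snd, extendByZero]
  add_comm p q := by
    refine Prod.ext ?_ (add_comm p.2 q.2)
    simp only [add_fst]
    rw [c.extendByZero_comm, add_comm p.1]
  nsmul := nsmulRec

instance : IsCancelAdd c.Extension :=
  have : IsRightCancelAdd c.Extension := ⟨fun a p q h => by
    have h₂ : p.2 = q.2 := add_right_cancel (congrArg Prod.snd h)
    have h₁ := congrArg Prod.fst h
    simp only [add_fst, h₂] at h₁
    exact Prod.ext (by linarith) h₂⟩
  AddCommMagma.IsRightCancelAdd.toIsCancelAdd _

end Extension

noncomputable def inclusion : ℝ →+ c.Extension where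
  toFun a := .mk a 0
  map_zero' := rfl
  map_add' a b := by simp [Extension.mk_add_mk, extendByZero]

/-- `ℝ` is divisible, hence an injective `ℤ`-module, so the inclusion of `ℝ` into the Grothendieck
group of the extension has a retraction `r`; then `x ↦ r (0, x)` is a potential for `c`. -/
theorem exists_coboundary :
    ∃ Γ : ℝ → ℝ, ∀ x y, 0 < x → 0 < y → c.toFun x y = Γ x + Γ y - Γ (x + y) := by
  obtain ⟨r, hr⟩ := (Module.Baer.of_divisible ℝ).extension_property_addMonoidHom
    (Algebra.GrothendieckAddGroup.of.comp c.inclusion)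
    (Algebra.GrothendieckAddGroup.of_injective.comp fun a b h => congrArg Prod.fst h)
    (AddMonoidHom.id ℝ)
  let Γ (x : ℝ) : ℝ := r (Algebra.GrothendieckAddGroup.of (Extension.mk 0 x.toNNReal))
  refine ⟨Γ, fun x y hx hy => ?_⟩
  have hsplit : (Extension.mk 0 x.toNNReal : c.Extension) + .mk 0 y.toNNReal =
      c.inclusion (c.toFun x y) + .mk 0 (x + y).toNNReal := by
    simp [inclusion, Extension.mk_add_mk, extendByZero, hx.not_ge, hy.not_ge, hx.le, hy.le,
      Real.toNNReal_add]
  have hri : r (Algebra.GrothendieckAddGroup.of (c.inclusion (c.toFun x y))) = c.toFun x y :=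
    DFunLike.congr_fun hr (c.toFun x y)
  have := congrArg (r ∘ Algebra.GrothendieckAddGroup.of) hsplit
  simp only [Function.comp_apply, map_add, hri] at this
  simp only [Γ]
  linarith

end PosSymmCocycle

noncomputable def homogenize (α : ℝ) (f : ℝ → ℝ) (u v : ℝ) : ℝ := (u + v) ^ α * f (u / (u + v))

def IsPosHomogeneous (α : ℝ) (φ : ℝ → ℝ → ℝ) : Prop :=
  ∀ l u v, 0 < l → 0 < u → 0 < v → φ (l * u) (l * v) = l ^ α * φ u v

noncomputable def infoDefect (α : ℝ) (f : ℝ → ℝ) (x y : ℝ) : ℝ :=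
  f x + (1 - x) ^ α * f (y / (1 - x)) - f y - (1 - y) ^ α * f (x / (1 - y))

def starDefect (φ : ℝ → ℝ → ℝ) (u v w : ℝ) : ℝ := φ u (v + w) + φ v w - φ v (u + w) - φ u w

def IsStarSolution (φ : ℝ → ℝ → ℝ) : Prop :=
  ∀ u v w, 0 < u → 0 < v → 0 < w → starDefect φ u v w = 0

def starCocycle (φ : ℝ → ℝ → ℝ) (w x y : ℝ) : ℝ := φ x (y + w) + φ y w - φ (x + y) w

section homogenize

variable (α : ℝ) (f : ℝ → ℝ)

lemma homogenize_one_sub (x : ℝ) : homogenize α f x (1 - x) = f x := by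
  simp [homogenize]

lemma isPosHomogeneous_homogenize : IsPosHomogeneous α (homogenize α f) := by
  intro l u v hl hu hv
  rw [homogenize, homogenize, ← mul_add, mul_div_mul_left _ _ hl.ne',
    Real.mul_rpow hl.le (add_pos hu hv).le, mul_assoc]

lemma infoDefect_eq_starDefect_homogenize (x y : ℝ) :
    infoDefect α f x y = starDefect (homogenize α f) x y (1 - x - y) := by
  simp only [infoDefect, starDefect, homogenize]
  ring_nf
  simp

lemma homogenize_eq_of_eq_on_Ioo (a b : ℝ)
    (hf : ∀ x ∈ Ioo (0 : ℝ) 1, f x = a * x ^ α + b * (1 - x) ^ α - b)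
    {u v : ℝ} (hu : 0 < u) (hv : 0 < v) :
    homogenize α f u v = a * u ^ α + b * v ^ α - b * (u + v) ^ α := by
  have huv := add_pos hu hv
  have hmem : u / (u + v) ∈ Ioo (0 : ℝ) 1 :=
    ⟨div_pos hu huv, (div_lt_one huv).2 (by linarith)⟩
  have hsub : 1 - u / (u + v) = v / (u + v) := by field_simp; ring
  rw [homogenize, hf _ hmem, hsub, Real.div_rpow hu.le huv.le, Real.div_rpow hv.le huv.le]
  have : (u + v) ^ α ≠ 0 := (Real.rpow_pos_of_pos huv α).ne'
  field_simp

end homogenize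

section star

variable {α : ℝ} {φ : ℝ → ℝ → ℝ}

lemma starDefect_mul (hφ : IsPosHomogeneous α φ) {l u v w : ℝ} (hl : 0 < l) (hu : 0 < u)
    (hv : 0 < v) (hw : 0 < w) :
    starDefect φ (l * u) (l * v) (l * w) = l ^ α * starDefect φ u v w := by
  simp only [starDefect, ← mul_add, hφ l _ _ hl, hu, hv, hw, add_pos]
  ring

lemma starDefect_eq_five_term (φ : ℝ → ℝ → ℝ) (x y z r : ℝ) :
    starDefect φ y z r = starDefect φ x y (z + r) + starDefect φ x z r + starDefect φ y z (x + r)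
      + starDefect φ y x r - starDefect φ x z (y + r) := by
  simp only [starDefect]
  ring_nf

theorem isStarSolution_of_abs_starDefect_le {ε : ℝ} (hα : α < 0) (hε : 0 ≤ ε)
    (hφ : ∀ u v w, 0 < u → 0 < v → 0 < w → |starDefect φ u v w| ≤ ε * (u + v + w) ^ α) :
    IsStarSolution φ := by
  intro u v w hu hv hw
  have hbound : ∀ x, 0 < x → |starDefect φ u v w| ≤ 5 * ε * x ^ α := by
    intro x hx
    have bound : ∀ a b c, 0 < a → 0 < b → 0 < c → x ≤ a + b + c →
        |starDefect φ a b c| ≤ ε * x ^ α := fun a b c ha hb hc hx' =>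
      (hφ a b c ha hb hc).trans
        (mul_le_mul_of_nonneg_left (Real.rpow_le_rpow_of_nonpos hx hx' hα.le) hε)
    rw [starDefect_eq_five_term φ x u v w]
    obtain ⟨h₁, h₁'⟩ := abs_le.1 (bound x u (v + w) hx hu (by positivity) (by linarith))
    obtain ⟨h₂, h₂'⟩ := abs_le.1 (bound x v w hx hv hw (by linarith))
    obtain ⟨h₃, h₃'⟩ := abs_le.1 (bound u v (x + w) hu hv (by positivity) (by linarith))
    obtain ⟨h₄, h₄'⟩ := abs_le.1 (bound u x w hu hx hw (by linarith))
    obtain ⟨h₅, h₅'⟩ := abs_le.1 (bound x v (u + w) hx hv (by positivity) (by linarith))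
    exact abs_le.2 ⟨by linarith, by linarith⟩
  have hlim : Tendsto (fun x : ℝ => 5 * ε * x ^ α) atTop (𝓝 0) := by
    simpa using (tendsto_rpow_neg_atTop (neg_pos.2 hα)).const_mul (5 * ε)
  exact abs_eq_zero.1 (le_antisymm
    (ge_of_tendsto hlim (eventually_gt_atTop 0 |>.mono hbound)) (abs_nonneg _))

lemma isStarSolution_of_eq {a b : ℝ}
    (hφ : ∀ u v, 0 < u → 0 < v → φ u v = a * u ^ α + b * v ^ α - b * (u + v) ^ α) :
    IsStarSolution φ := by
  intro u v w hu hv hw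
  simp only [starDefect, hφ, hu, hv, hw, add_pos]
  ring_nf

lemma starCocycle_add_right (hstar : IsStarSolution φ) {w z x y : ℝ} (hw : 0 < w) (hz : 0 < z)
    (hx : 0 < x) (hy : 0 < y) : starCocycle φ (w + z) x y = starCocycle φ w x y := by
  have h₁ := hstar x z (y + w) hx hz (by positivity)
  have h₂ := hstar y z w hy hz hw
  have h₃ := hstar (x + y) z w (by positivity) hz hw
  simp only [starDefect, starCocycle] at *
  ring_nf at *
  linarith

lemma starCocycle_independent (hstar : IsStarSolution φ) {w w' x y : ℝ} (hw : 0 < w)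
    (hw' : 0 < w') (hx : 0 < x) (hy : 0 < y) :
    starCocycle φ w x y = starCocycle φ w' x y := by
  rw [← starCocycle_add_right hstar hw hw' hx hy, ← starCocycle_add_right hstar hw' hw hx hy,
    add_comm]

lemma starCocycle_comm (hstar : IsStarSolution φ) {w x y : ℝ} (hw : 0 < w) (hx : 0 < x)
    (hy : 0 < y) : starCocycle φ w x y = starCocycle φ w y x := by
  have := hstar x y w hx hy hw
  simp only [starDefect, starCocycle] at *
  rw [add_comm y x]
  linarith

lemma starCocycle_cocycle (hstar : IsStarSolution φ) {w x y z : ℝ} (hw : 0 < w) (hx : 0 < x)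
    (hy : 0 < y) (hz : 0 < z) :
    starCocycle φ w x y + starCocycle φ w (x + y) z =
      starCocycle φ w y z + starCocycle φ w x (y + z) := by
  rw [← starCocycle_add_right hstar hw hz hx hy]
  simp only [starCocycle]
  ring_nf

lemma starCocycle_mul (hφ : IsPosHomogeneous α φ) (hstar : IsStarSolution φ) {l x y : ℝ}
    (hl : 0 < l) (hx : 0 < x) (hy : 0 < y) :
    starCocycle φ 1 (l * x) (l * y) = l ^ α * starCocycle φ 1 x y := by
  rw [starCocycle_independent hstar one_pos (mul_pos hl one_pos) (mul_pos hl hx) (mul_pos hl hy)]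
  simp only [starCocycle, ← mul_add, hφ l _ _ hl, hx, hy, one_pos, add_pos]
  ring

end star

/-- `Γ (2 * x) - 2 ^ α * Γ x` is additive, so `x ↦ C x x / (2 - 2 ^ α)` is also a potential
for `C`; by homogeneity it is a multiple of `x ^ α`. -/
theorem eq_mul_rpow_coboundary {α : ℝ} (hα : α ≠ 1) {C : ℝ → ℝ → ℝ}
    (hC : IsPosHomogeneous α C) {Γ : ℝ → ℝ}
    (hΓ : ∀ x y, 0 < x → 0 < y → C x y = Γ x + Γ y - Γ (x + y)) {x y : ℝ} (hx : 0 < x)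
    (hy : 0 < y) : C x y = C 1 1 / (2 - 2 ^ α) * (x ^ α + y ^ α - (x + y) ^ α) := by
  have h2 : (2 : ℝ) - 2 ^ α ≠ 0 := by
    rw [sub_ne_zero, ne_comm]
    conv_rhs => rw [← Real.rpow_one 2]
    exact fun h => hα ((Real.rpow_right_inj two_pos (by norm_num)).1 h)
  have hdiag : ∀ t, 0 < t → C t t = t ^ α * C 1 1 := fun t ht => by
    simpa using hC t 1 1 ht one_pos one_pos
  have hxy := add_pos hx hy
  have hΓdiag : ∀ t, 0 < t → C t t = 2 * Γ t - Γ (2 * t) := fun t ht => by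
    rw [hΓ t t ht ht, two_mul, two_mul]
  have hΓ2 := hΓ (2 * x) (2 * y) (by positivity) (by positivity)
  rw [hC 2 x y two_pos hx hy, ← mul_add] at hΓ2
  have key : (2 - 2 ^ α) * C x y = C x x + C y y - C (x + y) (x + y) := by
    linear_combination (2 : ℝ) * hΓ x y hx hy - hΓ2 - hΓdiag x hx - hΓdiag y hy
      + hΓdiag (x + y) hxy
  rw [hdiag x hx, hdiag y hy, hdiag _ hxy] at key
  field_simp
  linear_combination key

/-- Comparing the scalings by `2 * l` and `l * 2` removes the additive constants. -/
theorem exists_eq_mul_rpow_add_const {α : ℝ} (hα : α ≠ 0) {P : ℝ → ℝ}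
    (hP : ∀ l u t, 1 ≤ l → 0 < u → 1 < t →
      P (l * t) - P (l * u + l * t) = l ^ α * (P t - P (u + t))) :
    ∃ b β, ∀ t, 1 < t → P t = b * t ^ α + β := by
  obtain ⟨k, hk⟩ : ∃ k : ℝ → ℝ, ∀ l t, 1 ≤ l → 1 < t → P (l * t) = l ^ α * P t + k l := by
    refine ⟨fun l => P (l * 2) - l ^ α * P 2, fun l t hl ht => ?_⟩
    have h₁ := hP l 2 t hl two_pos ht
    have h₂ := hP l t 2 hl (by linarith) one_lt_two
    rw [← mul_add, add_comm] at h₁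
    rw [← mul_add] at h₂
    linarith
  have h2 : (2 : ℝ) ^ α - 1 ≠ 0 := by
    rw [sub_ne_zero]
    conv_rhs => rw [← Real.rpow_zero 2]
    exact fun h => hα ((Real.rpow_right_inj two_pos (by norm_num)).1 h)
  have hkl : ∀ l, 1 ≤ l → k l * (2 ^ α - 1) = k 2 * (l ^ α - 1) := by
    intro l hl
    have e₁ := hk l (2 * 2) hl (by norm_num)
    have e₂ := hk 2 (l * 2) one_le_two (by linarith)
    have e₃ := hk 2 2 one_le_two one_lt_two
    have e₄ := hk l 2 hl one_lt_two
    rw [show l * (2 * 2) = 2 * (l * 2) by ring] at e₁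
    linear_combination e₁ - e₂ + l ^ α * e₃ - 2 ^ α * e₄
  obtain ⟨β, hβ⟩ : ∃ β, β * (2 ^ α - 1) = -k 2 := ⟨_, div_mul_cancel₀ _ h2⟩
  have hPβ : ∀ l t, 1 ≤ l → 1 < t → P (l * t) - β = l ^ α * (P t - β) := by
    intro l t hl ht
    have hkβ : k l = β * (1 - l ^ α) :=
      mul_right_cancel₀ h2 (by linear_combination hkl l hl + (l ^ α - 1) * hβ)
    rw [hk l t hl ht, hkβ]
    ring
  refine ⟨(P 2 - β) / 2 ^ α, β, fun t ht => ?_⟩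
  have e₁ := hPβ t 2 ht.le one_lt_two
  have e₂ := hPβ 2 t one_le_two ht
  rw [mul_comm] at e₁
  have : (2 : ℝ) ^ α ≠ 0 := (Real.rpow_pos_of_pos two_pos α).ne'
  field_simp
  linear_combination e₁ - e₂

theorem exists_eq_of_starCocycle_eq_zero {α : ℝ} (hα : α ≠ 0) {R : ℝ → ℝ → ℝ}
    (hR : IsPosHomogeneous α R)
    (h0 : ∀ w x y, 0 < w → 0 < x → 0 < y → starCocycle R w x y = 0) :
    ∃ b, ∀ u v, 0 < u → 0 < v → R u v = b * (v ^ α - (u + v) ^ α) := by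
  set P : ℝ → ℝ := fun t => -R (t - 1) 1
  have hRP : ∀ u v, 0 < u → 1 < v → R u v = P v - P (u + v) := by
    intro u v hu hv
    have := h0 1 u (v - 1) one_pos hu (by linarith)
    simp only [starCocycle, sub_add_cancel, P] at this ⊢
    rw [show u + v - 1 = u + (v - 1) by ring]
    linarith
  obtain ⟨b, β, hb⟩ := exists_eq_mul_rpow_add_const hα (P := P) fun l u t hl hu ht => by
    rw [← hRP _ _ (by positivity) (by nlinarith), ← hRP u t hu ht,
      hR l u t (by linarith) hu (by linarith)]
  refine ⟨b, fun u v hu hv => ?_⟩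
  have hl : 0 < 2 / v := by positivity
  have hlv : 2 / v * v = 2 := div_mul_cancel₀ 2 hv.ne'
  have := hR _ u v hl hu hv
  rw [hRP _ _ (by positivity) (by rw [hlv]; norm_num), hb _ (by rw [hlv]; norm_num),
    hb _ (by nlinarith [mul_pos hl hu]), ← mul_add, Real.mul_rpow hl.le hv.le,
    Real.mul_rpow hl.le (by positivity)] at this
  exact mul_left_cancel₀ (Real.rpow_pos_of_pos hl α).ne' (by linear_combination -this)

theorem exists_starCocycle_eq {α : ℝ} (hα : α ≠ 1) {φ : ℝ → ℝ → ℝ}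
    (hφ : IsPosHomogeneous α φ) (hstar : IsStarSolution φ) :
    ∃ g, ∀ w x y, 0 < w → 0 < x → 0 < y →
      starCocycle φ w x y = g * (x ^ α + y ^ α - (x + y) ^ α) := by
  let c : PosSymmCocycle :=
    ⟨starCocycle φ 1, fun x y hx hy => starCocycle_comm hstar one_pos hx hy,
      fun x y z hx hy hz => starCocycle_cocycle hstar one_pos hx hy hz⟩
  obtain ⟨Γ, hΓ⟩ := c.exists_coboundary
  refine ⟨starCocycle φ 1 1 1 / (2 - 2 ^ α), fun w x y hw hx hy => ?_⟩
  rw [starCocycle_independent hstar hw one_pos hx hy]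
  exact eq_mul_rpow_coboundary hα (fun l x y hl hx hy => starCocycle_mul hφ hstar hl hx hy)
    hΓ hx hy

theorem exists_eq_of_isStarSolution {α : ℝ} (hα₀ : α ≠ 0) (hα₁ : α ≠ 1) {φ : ℝ → ℝ → ℝ}
    (hφ : IsPosHomogeneous α φ) (hstar : IsStarSolution φ) :
    ∃ a b, ∀ u v, 0 < u → 0 < v → φ u v = a * u ^ α + b * v ^ α - b * (u + v) ^ α := by
  obtain ⟨a, ha⟩ := exists_starCocycle_eq hα₁ hφ hstar
  obtain ⟨b, hb⟩ := exists_eq_of_starCocycle_eq_zero hα₀ (R := fun u v => φ u v - a * u ^ α)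
    (fun l u v hl hu hv => by
      simp only [hφ l u v hl hu hv, Real.mul_rpow hl.le hu.le]
      ring)
    (fun w x y hw hx hy => by
      have := ha w x y hw hx hy
      simp only [starCocycle] at this ⊢
      linarith)
  exact ⟨a, b, fun u v hu hv => by linarith [hb u v hu hv]⟩

lemma abs_starDefect_homogenize_le {α ε : ℝ} {f : ℝ → ℝ}
    (hf : ∀ x y : ℝ, x ∈ Ioo (0 : ℝ) 1 → y ∈ Ioo (0 : ℝ) 1 → x + y ∈ Ioo (0 : ℝ) 1 →
      |infoDefect α f x y| ≤ ε)
    {u v w : ℝ} (hu : 0 < u) (hv : 0 < v) (hw : 0 < w) :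
    |starDefect (homogenize α f) u v w| ≤ ε * (u + v + w) ^ α := by
  set s := u + v + w
  have hs : 0 < s := by positivity
  have hscale : ∀ t, t = s * (t / s) := fun t => (mul_div_cancel₀ t hs.ne').symm
  have hw' : w / s = 1 - u / s - v / s := by field_simp; ring
  rw [hscale u, hscale v, hscale w, starDefect_mul (isPosHomogeneous_homogenize α f) hs
    (by positivity) (by positivity) (by positivity), hw', ← infoDefect_eq_starDefect_homogenize,
    abs_mul, abs_of_pos (Real.rpow_pos_of_pos hs α), mul_comm]
  refine mul_le_mul_of_nonneg_right (hf _ _ ⟨by positivity, (div_lt_one hs).2 (by linarith)⟩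
    ⟨by positivity, (div_lt_one hs).2 (by linarith)⟩
    ⟨by positivity, by rw [← add_div, div_lt_one hs]; linarith⟩) (Real.rpow_pos_of_pos hs α).le

/-- Hyperstability of the parametric fundamental equation of information, α < 0. -/
theorem stmt_5 (α ε : ℝ) (hα : α < 0) (hε : 0 ≤ ε) (f : ℝ → ℝ) :
    (∀ x y : ℝ, x ∈ Ioo (0 : ℝ) 1 → y ∈ Ioo (0 : ℝ) 1 → x + y ∈ Ioo (0 : ℝ) 1 →
      |f x + (1 - x) ^ α * f (y / (1 - x)) - f y - (1 - y) ^ α * f (x / (1 - y))| ≤ ε)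
    ↔ ∃ a b : ℝ, ∀ x ∈ Ioo (0 : ℝ) 1, f x = a * x ^ α + b * (1 - x) ^ α - b := by
  constructor
  · intro hf
    have hstar : IsStarSolution (homogenize α f) := isStarSolution_of_abs_starDefect_le hα hε
      fun u v w hu hv hw => abs_starDefect_homogenize_le hf hu hv hw
    obtain ⟨a, b, hab⟩ := exists_eq_of_isStarSolution hα.ne (by linarith)
      (isPosHomogeneous_homogenize α f) hstar
    refine ⟨a, b, fun x hx => ?_⟩
    simpa [homogenize_one_sub] using hab x (1 - x) hx.1 (by linarith [hx.2])
  · rintro ⟨a, b, hab⟩ x y hx hy hxy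
    change |infoDefect α f x y| ≤ ε
    rw [infoDefect_eq_starDefect_homogenize,
      isStarSolution_of_eq (fun u v => homogenize_eq_of_eq_on_Ioo α f a b hab) x y _ hx.1 hy.1
        (by linarith [hxy.2]), abs_zero]
    exact hε
end

section
/- Let α > 0, α ≠ 1, ε ≥ 0, and f : (0,1) → ℝ satisfy |f(x) + (1−x)^α f(y/(1−x)) − f(y) − (1−y)^α f(x/(1−y))| ≤ ε for all (x,y) with x, y, x+y ∈ (0,1). Then there exist a, b ∈ ℝ such that |f(x) − (a x^α + b(1−x)^α − b)| ≤ K(α)ε for all x ∈ (0,1), where K(α) = |2^{1−α} − 1|^{−1} (3 + 12·2^α + 32·3^{α+1}/|2^{−α} − 1|). -/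
/-!
Put `F(u, v) = (u + v)^α f(u / (u + v))`, the extension of `f` to pairs that is homogeneous of
degree `α`. The hypothesis says exactly that the defect
`F(u, v + w) + F(v, w) - F(v, u + w) - F(u, w)` is at most `(u + v + w)^α ε` in absolute value.
Six defects at rescaled points telescope to show that the skew part `F(u, v) - F(v, u)` equals
`c (u^α - v^α) / (2^α - 1)` up to `O(ε)`, where `c = F(2, 1) - F(1, 2)`; six more, at points built
from `x` and `1 - x`, control the symmetric part `F(x, 1 - x) + F(1 - x, x)`. As `2^α ≠ 1, 2`,
both relations can be solved for `f x = F(x, 1 - x)`.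
-/

open Set

namespace InformationEquation

def IsApproxSolution (α ε : ℝ) (f : ℝ → ℝ) : Prop :=
  ∀ x y : ℝ, x ∈ Ioo (0 : ℝ) 1 → y ∈ Ioo (0 : ℝ) 1 → x + y ∈ Ioo (0 : ℝ) 1 →
    |f x + (1 - x) ^ α * f (y / (1 - x)) - f y - (1 - y) ^ α * f (x / (1 - y))| ≤ ε

noncomputable def homExt (α : ℝ) (f : ℝ → ℝ) (u v : ℝ) : ℝ := (u + v) ^ α * f (u / (u + v))

noncomputable def defect (α : ℝ) (f : ℝ → ℝ) (u v w : ℝ) : ℝ :=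
  homExt α f u (v + w) + homExt α f v w - homExt α f v (u + w) - homExt α f u w

noncomputable def skew (α : ℝ) (f : ℝ → ℝ) (u v : ℝ) : ℝ :=
  (2 ^ α - 1) * (homExt α f u v - homExt α f v u) -
    (homExt α f 2 1 - homExt α f 1 2) * (u ^ α - v ^ α)

variable {α ε : ℝ} {f : ℝ → ℝ}

theorem one_lt_two_rpow (hα : 0 < α) : 1 < (2 : ℝ) ^ α := Real.one_lt_rpow one_lt_two hα

theorem two_rpow_ne_two (hα1 : α ≠ 1) : (2 : ℝ) ^ α ≠ 2 := by
  simpa using (Real.rpow_right_inj two_pos (by norm_num : (2 : ℝ) ≠ 1) (z := 1)).not.mpr hα1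

theorem homExt_mul_left {t u v : ℝ} (ht : 0 < t) (huv : 0 ≤ u + v) :
    homExt α f (t * u) (t * v) = t ^ α * homExt α f u v := by
  rw [homExt, homExt, ← mul_add, Real.mul_rpow ht.le huv, mul_div_mul_left _ _ ht.ne', mul_assoc]

theorem homExt_of_add_eq_one {u v : ℝ} (h : u + v = 1) : homExt α f u v = f u := by
  rw [homExt, h, Real.one_rpow, div_one, one_mul]

theorem homExt_mul_right {t : ℝ} (u v : ℝ) (ht : 0 < t) (huv : 0 ≤ u + v) :
    homExt α f (u * t) (v * t) = t ^ α * homExt α f u v := by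
  rw [mul_comm u, mul_comm v, homExt_mul_left ht huv]

theorem defect_mul_left {t u v w : ℝ} (ht : 0 < t) (hu : 0 ≤ u) (hv : 0 ≤ v) (hw : 0 ≤ w) :
    defect α f (t * u) (t * v) (t * w) = t ^ α * defect α f u v w := by
  simp only [defect, ← mul_add]
  rw [homExt_mul_left ht (by positivity), homExt_mul_left ht (by positivity),
    homExt_mul_left ht (by positivity), homExt_mul_left ht (by positivity)]
  ring

theorem defect_of_add_eq_one {x y z : ℝ} (h : x + y + z = 1) :
    defect α f x y z =
      f x + (1 - x) ^ α * f (y / (1 - x)) - f y - (1 - y) ^ α * f (x / (1 - y)) := by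
  rw [defect, homExt_of_add_eq_one (u := x) (v := y + z) (by linarith),
    homExt_of_add_eq_one (u := y) (v := x + z) (by linarith), homExt, homExt,
    show y + z = 1 - x by linarith, show x + z = 1 - y by linarith]

theorem abs_defect_le (h : IsApproxSolution α ε f) {u v w : ℝ} (hu : 0 < u) (hv : 0 < v)
    (hw : 0 < w) : |defect α f u v w| ≤ (u + v + w) ^ α * ε := by
  set S := u + v + w
  have hS : 0 < S := by positivity
  have hscale : defect α f u v w = S ^ α * defect α f (u / S) (v / S) (w / S) := by
    rw [← defect_mul_left hS (by positivity) (by positivity) (by positivity),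
      mul_div_cancel₀ _ hS.ne', mul_div_cancel₀ _ hS.ne', mul_div_cancel₀ _ hS.ne']
  have hsum : u / S + v / S + w / S = 1 := by rw [← add_div, ← add_div, div_self hS.ne']
  have hlt : ∀ t, 0 < t → t < S → t / S ∈ Ioo (0 : ℝ) 1 := fun t ht htS =>
    ⟨by positivity, (div_lt_one hS).mpr htS⟩
  rw [hscale, defect_of_add_eq_one hsum, abs_mul, abs_of_pos (by positivity)]
  gcongr
  refine h _ _ (hlt u hu (by linarith)) (hlt v hv (by linarith)) ?_
  rw [← add_div]
  exact hlt _ (by linarith) (by linarith)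

theorem skew_eq_sum_defect {u v : ℝ} (hu : 0 < u) (hv : 0 < v) :
    skew α f u v =
      defect α f (2 * u) (2 * v) v + defect α f (2 * v) v (2 * u) + defect α f v (2 * u) (2 * v)
        - defect α f v (2 * u) u - defect α f (2 * u) u v - defect α f u v (2 * u) := by
  have h21 : ∀ t, 0 < t → homExt α f (2 * t) t = t ^ α * homExt α f 2 1 := fun t ht => by
    simpa using homExt_mul_right (f := f) (α := α) 2 1 ht (by norm_num)
  have h12 : ∀ t, 0 < t → homExt α f t (2 * t) = t ^ α * homExt α f 1 2 := fun t ht => by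
    simpa using homExt_mul_right (f := f) (α := α) 1 2 ht (by norm_num)
  simp only [skew, defect]
  rw [homExt_mul_left two_pos (by positivity), homExt_mul_left two_pos (by positivity),
    h21 u hu, h21 v hv, h12 u hu, h12 v hv]
  -- unlike `ring`, `ring_nf` also normalises the arguments of `homExt` (`2 * v + v`, `v + 2 * v`)
  ring_nf

theorem abs_defect_le_of_add_le (hα : 0 ≤ α) (hε : 0 ≤ ε) (h : IsApproxSolution α ε f)
    {u v w M : ℝ} (hu : 0 < u) (hv : 0 < v) (hw : 0 < w) (hM : u + v + w ≤ M) :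
    |defect α f u v w| ≤ M ^ α * ε :=
  (abs_defect_le h hu hv hw).trans <| by gcongr

theorem abs_skew_le (hα : 0 ≤ α) (hε : 0 ≤ ε) (h : IsApproxSolution α ε f) {u v : ℝ}
    (hu : 0 < u) (hv : 0 < v) : |skew α f u v| ≤ 6 * ((3 * (u + v)) ^ α * ε) := by
  have hD {a b c : ℝ} (ha : 0 < a) (hb : 0 < b) (hc : 0 < c) (hM : a + b + c ≤ 3 * (u + v)) :=
    abs_le.mp (abs_defect_le_of_add_le hα hε h ha hb hc hM)
  have h2u : 0 < 2 * u := by positivity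
  have h2v : 0 < 2 * v := by positivity
  have := hD h2u h2v hv (by linarith)
  have := hD h2v hv h2u (by linarith)
  have := hD hv h2u h2v (by linarith)
  have := hD hv h2u hu (by linarith)
  have := hD h2u hu hv (by linarith)
  have := hD hu hv h2u (by linarith)
  rw [skew_eq_sum_defect hu hv, abs_le]
  constructor <;> linarith

-- `a, b` solve `F(2, 1) - F(1, 2) = (2^α - 1) (a - b)` and `F(1, 1) = a - (2^α - 1) b`, the values
-- on `(2, 1), (1, 2), (1, 1)` of the homogeneous extension `a u^α + b v^α - b (u + v)^α`.
noncomputable def coeffA (α : ℝ) (f : ℝ → ℝ) : ℝ :=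
  (homExt α f 2 1 - homExt α f 1 2 - homExt α f 1 1) / (2 ^ α - 2)

noncomputable def coeffB (α : ℝ) (f : ℝ → ℝ) : ℝ :=
  (homExt α f 2 1 - homExt α f 1 2 - (2 ^ α - 1) * homExt α f 1 1) / ((2 ^ α - 1) * (2 ^ α - 2))

theorem mul_sub_approx_eq (hs1 : (2 : ℝ) ^ α ≠ 1) (hs2 : (2 : ℝ) ^ α ≠ 2) {x : ℝ}
    (hx : x ∈ Ioo (0 : ℝ) 1) :
    2 * (2 ^ α - 1) * (2 ^ α - 2) *
        (f x - (coeffA α f * x ^ α + coeffB α f * (1 - x) ^ α - coeffB α f)) =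
      (2 ^ α - 1) * (defect α f x 1 (1 - x) + defect α f (1 - x) 1 x
          + defect α f (2 * x) (1 - x) (1 - x) + defect α f (2 * (1 - x)) x x
          + defect α f x (1 - x) (1 - x) + defect α f (1 - x) x x)
        + (skew α f (2 * x) (1 - x) + skew α f (2 * (1 - x)) x - skew α f 1 x - skew α f 1 (1 - x))
        + (2 ^ α - 2) * skew α f x (1 - x) := by
  obtain ⟨hx0, hx1⟩ := hx
  have hq0 : 0 < 1 - x := by linarith
  have hdiag : ∀ t, 0 < t → homExt α f t t = t ^ α * homExt α f 1 1 := fun t ht => by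
    simpa using homExt_mul_right (f := f) (α := α) 1 1 ht (by norm_num)
  have hsub1 : (2 : ℝ) ^ α - 1 ≠ 0 := sub_ne_zero.mpr hs1
  have hsub2 : (2 : ℝ) ^ α - 2 ≠ 0 := sub_ne_zero.mpr hs2
  simp only [defect, skew, coeffA, coeffB, ← two_mul]
  rw [homExt_mul_left two_pos (by positivity), homExt_mul_left two_pos (by positivity),
    hdiag x hx0, hdiag (1 - x) hq0, homExt_of_add_eq_one (u := x) (v := 1 - x) (by ring),
    Real.mul_rpow two_pos.le hx0.le, Real.mul_rpow two_pos.le hq0.le, Real.one_rpow]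
  field_simp
  ring_nf

theorem mul_abs_sub_approx_le (hα : 0 < α) (hα1 : α ≠ 1) (hε : 0 ≤ ε)
    (h : IsApproxSolution α ε f) {x : ℝ} (hx : x ∈ Ioo (0 : ℝ) 1) :
    2 * (2 ^ α - 1) * |2 ^ α - 2| *
        |f x - (coeffA α f * x ^ α + coeffB α f * (1 - x) ^ α - coeffB α f)| ≤
      (2 ^ α - 1) * (6 * (2 ^ α * ε)) + 4 * (6 * ((6 : ℝ) ^ α * ε)) +
        |2 ^ α - 2| * (6 * ((3 : ℝ) ^ α * ε)) := by
  obtain ⟨hx0, hx1⟩ := hx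
  have hq0 : 0 < 1 - x := by linarith
  have hs1 : 0 < (2 : ℝ) ^ α - 1 := sub_pos.mpr (one_lt_two_rpow hα)
  have hD {a b c : ℝ} (ha : 0 < a) (hb : 0 < b) (hc : 0 < c) (hM : a + b + c ≤ 2) :=
    abs_le.mp (abs_defect_le_of_add_le hα.le hε h ha hb hc hM)
  have hS {a b : ℝ} (ha : 0 < a) (hb : 0 < b) (hM : 3 * (a + b) ≤ 6) :
      |skew α f a b| ≤ 6 * ((6 : ℝ) ^ α * ε) :=
    (abs_skew_le hα.le hε h ha hb).trans (by gcongr)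
  set D := defect α f x 1 (1 - x) + defect α f (1 - x) 1 x + defect α f (2 * x) (1 - x) (1 - x)
    + defect α f (2 * (1 - x)) x x + defect α f x (1 - x) (1 - x) + defect α f (1 - x) x x
  set S := skew α f (2 * x) (1 - x) + skew α f (2 * (1 - x)) x - skew α f 1 x - skew α f 1 (1 - x)
  have hDle : |D| ≤ 6 * (2 ^ α * ε) := by
    have := hD hx0 one_pos hq0 (by linarith)
    have := hD hq0 one_pos hx0 (by linarith)
    have := hD (by positivity : 0 < 2 * x) hq0 hq0 (by linarith)
    have := hD (by positivity : 0 < 2 * (1 - x)) hx0 hx0 (by linarith)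
    have := hD hx0 hq0 hq0 (by linarith)
    have := hD hq0 hx0 hx0 (by linarith)
    rw [abs_le]
    constructor <;> linarith
  have hSle : |S| ≤ 4 * (6 * ((6 : ℝ) ^ α * ε)) := by
    have := abs_le.mp (hS (by positivity : 0 < 2 * x) hq0 (by linarith))
    have := abs_le.mp (hS (by positivity : 0 < 2 * (1 - x)) hx0 (by linarith))
    have := abs_le.mp (hS one_pos hx0 (by linarith))
    have := abs_le.mp (hS one_pos hq0 (by linarith))
    rw [abs_le]
    constructor <;> linarith
  have hskew : |skew α f x (1 - x)| ≤ 6 * ((3 : ℝ) ^ α * ε) := by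
    simpa using abs_skew_le hα.le hε h hx0 hq0
  calc _ = |2 * (2 ^ α - 1) * (2 ^ α - 2) *
        (f x - (coeffA α f * x ^ α + coeffB α f * (1 - x) ^ α - coeffB α f))| := by
        rw [abs_mul, abs_mul, abs_mul, abs_two, abs_of_pos hs1]
    _ = |(2 ^ α - 1) * D + S + (2 ^ α - 2) * skew α f x (1 - x)| := by
        rw [mul_sub_approx_eq (one_lt_two_rpow hα).ne' (two_rpow_ne_two hα1) ⟨hx0, hx1⟩]
    _ ≤ |(2 ^ α - 1) * D| + |S| + |(2 ^ α - 2) * skew α f x (1 - x)| := abs_add_three _ _ _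
    _ = (2 ^ α - 1) * |D| + |S| + |2 ^ α - 2| * |skew α f x (1 - x)| := by
        rw [abs_mul, abs_mul, abs_of_pos hs1]
    _ ≤ _ := by gcongr

noncomputable def stabilityConst (α : ℝ) : ℝ :=
  |2 ^ (1 - α) - 1|⁻¹ * (3 + 12 * 2 ^ α + 32 * 3 ^ (α + 1) / |2 ^ (-α) - 1|)

theorem mul_stabilityConst_eq (hα : 0 < α) (hα1 : α ≠ 1) :
    2 * (2 ^ α - 1) * |2 ^ α - 2| * stabilityConst α =
      6 * 2 ^ α * (2 ^ α - 1) + 24 * (2 ^ α) ^ 2 * (2 ^ α - 1) + 192 * (2 ^ α) ^ 2 * 3 ^ α := by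
  have hs : (0 : ℝ) < 2 ^ α := by positivity
  have hs1 : (0 : ℝ) < 2 ^ α - 1 := sub_pos.mpr (one_lt_two_rpow hα)
  have h1 : |(2 : ℝ) ^ (1 - α) - 1| = |2 ^ α - 2| / 2 ^ α := by
    rw [Real.rpow_sub two_pos, Real.rpow_one, abs_sub_comm, ← abs_of_pos hs, ← abs_div,
      abs_of_pos hs]
    congr 1
    field_simp
  have h2 : |(2 : ℝ) ^ (-α) - 1| = (2 ^ α - 1) / 2 ^ α := by
    rw [Real.rpow_neg two_pos.le, abs_sub_comm, abs_of_nonneg]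
    · field_simp
    · rw [sub_nonneg]
      exact inv_le_one_of_one_le₀ (one_lt_two_rpow hα).le
  have h2' : |(2 : ℝ) ^ α - 2| ≠ 0 := abs_ne_zero.mpr (sub_ne_zero.mpr (two_rpow_ne_two hα1))
  rw [stabilityConst, h1, h2, Real.rpow_add three_pos, Real.rpow_one]
  field_simp
  ring

theorem bound_le_mul_stabilityConst (hα : 0 < α) (hα1 : α ≠ 1) (hε : 0 ≤ ε) :
    (2 ^ α - 1) * (6 * (2 ^ α * ε)) + 4 * (6 * ((6 : ℝ) ^ α * ε)) +
        |2 ^ α - 2| * (6 * ((3 : ℝ) ^ α * ε)) ≤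
      2 * (2 ^ α - 1) * |2 ^ α - 2| * (stabilityConst α * ε) := by
  have hs1 := one_lt_two_rpow hα
  have ht : (0 : ℝ) < 3 ^ α := by positivity
  have h6 : (6 : ℝ) ^ α = 2 ^ α * 3 ^ α := by
    rw [show (6 : ℝ) = 2 * 3 by norm_num, Real.mul_rpow two_pos.le three_pos.le]
  have habs : |(2 : ℝ) ^ α - 2| ≤ 3 * (2 ^ α) ^ 2 := by
    rw [abs_le]
    constructor <;> nlinarith
  rw [← mul_assoc (2 * (2 ^ α - 1) * |2 ^ α - 2|), mul_stabilityConst_eq hα hα1, h6]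
  have hcoeff : 24 * (2 : ℝ) ^ α * 3 ^ α + 6 * |(2 : ℝ) ^ α - 2| * 3 ^ α ≤
      24 * ((2 : ℝ) ^ α) ^ 2 * (2 ^ α - 1) + 192 * ((2 : ℝ) ^ α) ^ 2 * 3 ^ α := by
    have hst : (2 : ℝ) ^ α * 3 ^ α ≤ (2 ^ α) ^ 2 * 3 ^ α := by
      gcongr
      nlinarith
    nlinarith [mul_le_mul_of_nonneg_right habs ht.le,
      mul_nonneg (sq_nonneg ((2 : ℝ) ^ α)) (sub_nonneg.mpr hs1.le)]
  nlinarith [mul_le_mul_of_nonneg_right hcoeff hε]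

end InformationEquation

open InformationEquation in
/-- Superstability of the parametric fundamental equation of information, 0 < α ≠ 1. -/
theorem stmt_7 (α ε : ℝ) (hα : 0 < α) (hα1 : α ≠ 1) (hε : 0 ≤ ε) (f : ℝ → ℝ)
    (h : ∀ x y : ℝ, x ∈ Ioo (0 : ℝ) 1 → y ∈ Ioo (0 : ℝ) 1 → x + y ∈ Ioo (0 : ℝ) 1 →
      |f x + (1 - x) ^ α * f (y / (1 - x)) - f y - (1 - y) ^ α * f (x / (1 - y))| ≤ ε) :
    ∃ a b : ℝ, ∀ x ∈ Ioo (0 : ℝ) 1,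
      |f x - (a * x ^ α + b * (1 - x) ^ α - b)| ≤
        |2 ^ (1 - α) - 1|⁻¹ * (3 + 12 * 2 ^ α + 32 * 3 ^ (α + 1) / |2 ^ (-α) - 1|) * ε := by
  have hpos : 0 < 2 * ((2 : ℝ) ^ α - 1) * |(2 : ℝ) ^ α - 2| := by
    have := sub_pos.mpr (one_lt_two_rpow hα)
    have := abs_pos.mpr (sub_ne_zero.mpr (two_rpow_ne_two hα1))
    positivity
  refine ⟨coeffA α f, coeffB α f, fun x hx => le_of_mul_le_mul_left ?_ hpos⟩
  exact (mul_abs_sub_approx_le hα hα1 hε h hx).trans (bound_le_mul_stabilityConst hα hα1 hε)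
end

section
/- Let α < 0 and suppose f : ℝ₊³ → ℝ is symmetric (f(x,y,z) = f(σ(x),σ(y),σ(z)) for all permutations σ) and satisfies f(x,y,z) = f(x, y+z, 0) + (y+z)^α f(0, y/(y+z), z/(y+z)) for all x, y, z > 0. Then there exist a ∈ ℝ and φ : ℝ₊₊ → ℝ such that f(x,y,z) = a x^α + a y^α + a z^α + φ(x+y+z) for all x, y, z > 0. -/
/-!
The second summand of the equation, `Φ(y, z) = (y+z)^α f(0, y/(y+z), z/(y+z))`, is symmetric and
homogeneous of degree `α`. Comparing the equation at `(x, y, z)` and `(y, x, z)` on the simplex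
`x + y + z = 1`, where `f(x, y+z, 0) = Φ(x, y+z)`, and rescaling shows that `Φ` is a cocycle.
A symmetric cocycle homogeneous of degree `α ≠ 1` is `a (u^α + v^α - (u+v)^α)`: its values at
`(t, 1)` are pinned down by three instances of the cocycle identity. Hence
`f(x,y,z) - a(x^α + y^α + z^α) = h(x, y+z)` with `h(x, w) = f(x, w, 0) - a x^α - a w^α`, and the
symmetry `x ↔ y` makes `h(x, s - x)` independent of `x ∈ (0, s)`.
-/

open Real

section Cocycle

variable {α : ℝ} {Φ : ℝ → ℝ → ℝ}

theorem cocycle_apply_one (hsymm : ∀ u v, 0 < u → 0 < v → Φ u v = Φ v u)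
    (hhom : ∀ c u v, 0 < c → 0 < u → 0 < v → Φ (c * u) (c * v) = c ^ α * Φ u v)
    (hcoc : ∀ u v w, 0 < u → 0 < v → 0 < w → Φ u v + Φ (u + v) w = Φ u (v + w) + Φ v w)
    {t : ℝ} (ht : 0 < t) :
    (2 - 2 ^ α) * Φ t 1 = (1 + t ^ α - (t + 1) ^ α) * Φ 1 1 := by
  have e1 := hcoc t 1 (t + 1) ht one_pos (by linarith)
  have e2 := hcoc t t 2 ht ht two_pos
  have e3 := hcoc t 1 1 ht one_pos one_pos
  have h1 := hhom t 1 1 ht one_pos one_pos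
  have h2 := hhom 2 t 1 two_pos ht one_pos
  have h3 := hhom (t + 1) 1 1 (by linarith) one_pos one_pos
  have h4 := hsymm 1 (t + 1) one_pos (by linarith)
  simp only [mul_one] at h1 h2 h3
  rw [show (1 : ℝ) + (t + 1) = t + 2 by ring] at e1
  rw [← two_mul] at e2
  rw [one_add_one_eq_two] at e3
  linear_combination e1 - e2 + e3 + h4 - h3 + h1 + h2

theorem exists_eq_of_symm_of_homogeneous_cocycle (hα : α ≠ 1)
    (hsymm : ∀ u v, 0 < u → 0 < v → Φ u v = Φ v u)
    (hhom : ∀ c u v, 0 < c → 0 < u → 0 < v → Φ (c * u) (c * v) = c ^ α * Φ u v)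
    (hcoc : ∀ u v w, 0 < u → 0 < v → 0 < w → Φ u v + Φ (u + v) w = Φ u (v + w) + Φ v w) :
    ∃ a, ∀ u v, 0 < u → 0 < v → Φ u v = a * (u ^ α + v ^ α - (u + v) ^ α) := by
  have hden : (2 : ℝ) - 2 ^ α ≠ 0 := by
    rw [sub_ne_zero, ne_comm]
    conv_rhs => rw [← rpow_one 2]
    exact (rpow_right_inj two_pos (by norm_num)).not.mpr hα
  refine ⟨Φ 1 1 / (2 - 2 ^ α), fun u v hu hv => ?_⟩
  have key : Φ (u / v) 1 = (1 + (u / v) ^ α - (u / v + 1) ^ α) * Φ 1 1 / (2 - 2 ^ α) := by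
    rw [eq_div_iff hden, mul_comm, cocycle_apply_one hsymm hhom hcoc (div_pos hu hv)]
  have hscale : Φ u v = v ^ α * Φ (u / v) 1 := by
    rw [← hhom v _ _ hv (div_pos hu hv) one_pos, mul_div_cancel₀ _ hv.ne', mul_one]
  have hu' : u ^ α = v ^ α * (u / v) ^ α := by
    rw [← mul_rpow hv.le (div_pos hu hv).le, mul_div_cancel₀ _ hv.ne']
  have huv : (u + v) ^ α = v ^ α * (u / v + 1) ^ α := by
    rw [← mul_rpow hv.le (by positivity), mul_add, mul_div_cancel₀ _ hv.ne', mul_one]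
  rw [hscale, hu', huv, key]
  ring

end Cocycle

theorem exists_eq_add_of_exchange {h : ℝ → ℝ → ℝ}
    (hexch : ∀ x y z, 0 < x → 0 < y → 0 < z → h x (y + z) = h y (x + z)) :
    ∃ φ : ℝ → ℝ, ∀ x w, 0 < x → 0 < w → h x w = φ (x + w) := by
  have hstep : ∀ s x x', 0 < x → 0 < x' → x + x' < s → h x (s - x) = h x' (s - x') := by
    intro s x x' hx hx' hs
    have := hexch x x' (s - x - x') hx hx' (by linarith)
    rwa [show x' + (s - x - x') = s - x by ring, show x + (s - x - x') = s - x' by ring] at this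
  refine ⟨fun s => h (s / 2) (s - s / 2), fun x w hx hw => ?_⟩
  calc h x w = h x (x + w - x) := by rw [add_sub_cancel_left]
    _ = h (w / 2) (x + w - w / 2) := hstep _ _ _ hx (by positivity) (by linarith)
    _ = h ((x + w) / 2) (x + w - (x + w) / 2) :=
      (hstep _ _ _ (by positivity) (by positivity) (by linarith)).symm

def IsSymmetricOnNonneg (f : ℝ → ℝ → ℝ → ℝ) : Prop :=
  ∀ x y z : ℝ, 0 ≤ x → 0 ≤ y → 0 ≤ z → ∀ σ : Equiv.Perm (Fin 3),
    f x y z = f (![x, y, z] (σ 0)) (![x, y, z] (σ 1)) (![x, y, z] (σ 2))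

namespace IsSymmetricOnNonneg

variable {f : ℝ → ℝ → ℝ → ℝ} {x y z : ℝ}

theorem swap_left (hf : IsSymmetricOnNonneg f) (hx : 0 ≤ x) (hy : 0 ≤ y) (hz : 0 ≤ z) :
    f x y z = f y x z := by
  simpa [Equiv.swap_apply_of_ne_of_ne] using hf x y z hx hy hz (Equiv.swap 0 1)

theorem swap_right (hf : IsSymmetricOnNonneg f) (hx : 0 ≤ x) (hy : 0 ≤ y) (hz : 0 ≤ z) :
    f x y z = f x z y := by
  simpa [Equiv.swap_apply_of_ne_of_ne] using hf x y z hx hy hz (Equiv.swap 1 2)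

theorem rotate (hf : IsSymmetricOnNonneg f) (hx : 0 ≤ x) (hy : 0 ≤ y) (hz : 0 ≤ z) :
    f x y z = f z x y := by
  simpa using hf x y z hx hy hz (finRotate 3).symm

end IsSymmetricOnNonneg

noncomputable def entropyKernel (α : ℝ) (f : ℝ → ℝ → ℝ → ℝ) (u v : ℝ) : ℝ :=
  (u + v) ^ α * f 0 (u / (u + v)) (v / (u + v))

section EntropyKernel

variable {α : ℝ} {f : ℝ → ℝ → ℝ → ℝ} {u v : ℝ}

theorem entropyKernel_comm (hf : IsSymmetricOnNonneg f) (hu : 0 ≤ u) (hv : 0 ≤ v) :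
    entropyKernel α f u v = entropyKernel α f v u := by
  rw [entropyKernel, entropyKernel, add_comm v u,
    hf.swap_right le_rfl (div_nonneg hu (by positivity)) (div_nonneg hv (by positivity))]

theorem entropyKernel_mul {c : ℝ} (hc : 0 < c) (huv : 0 ≤ u + v) :
    entropyKernel α f (c * u) (c * v) = c ^ α * entropyKernel α f u v := by
  simp only [entropyKernel, ← mul_add, mul_div_mul_left _ _ hc.ne', mul_rpow hc.le huv, mul_assoc]

theorem entropyKernel_of_add_eq_one (h : u + v = 1) : entropyKernel α f u v = f 0 u v := by
  simp [entropyKernel, h]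

theorem entropyKernel_exchange (hf : IsSymmetricOnNonneg f)
    (heq : ∀ x y z : ℝ, 0 < x → 0 < y → 0 < z → f x y z = f x (y + z) 0 + entropyKernel α f y z)
    {x y z : ℝ} (hx : 0 < x) (hy : 0 < y) (hz : 0 < z) :
    entropyKernel α f x (y + z) + entropyKernel α f y z
      = entropyKernel α f y (x + z) + entropyKernel α f x z := by
  -- `f x (y + z) 0` is a value of the kernel only on the simplex; homogeneity transports the rest.
  have hnorm : ∀ x y z, 0 < x → 0 < y → 0 < z → x + y + z = 1 →
      entropyKernel α f x (y + z) + entropyKernel α f y z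
        = entropyKernel α f y (x + z) + entropyKernel α f x z := by
    intro x y z hx hy hz hs
    have hfx : f x (y + z) 0 = entropyKernel α f x (y + z) := by
      rw [entropyKernel_of_add_eq_one (by linarith), hf.rotate hx.le (by positivity) le_rfl,
        hf.rotate le_rfl hx.le (by positivity)]
    have hfy : f y (x + z) 0 = entropyKernel α f y (x + z) := by
      rw [entropyKernel_of_add_eq_one (by linarith), hf.rotate hy.le (by positivity) le_rfl,
        hf.rotate le_rfl hy.le (by positivity)]
    have := hf.swap_left hx.le hy.le hz.le
    rw [heq x y z hx hy hz, heq y x z hy hx hz, hfx, hfy] at this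
    exact this
  set s := x + y + z
  have hs : 0 < s := by positivity
  have hscale : ∀ p q, 0 ≤ p + q → entropyKernel α f p q = s ^ α * entropyKernel α f (p / s) (q / s) := by
    intro p q hpq
    rw [← entropyKernel_mul hs (by rw [← add_div]; positivity), mul_div_cancel₀ _ hs.ne',
      mul_div_cancel₀ _ hs.ne']
  rw [hscale x (y + z) (by positivity), hscale y z (by positivity), hscale y (x + z) (by positivity),
    hscale x z (by positivity), add_div, add_div]
  linear_combination s ^ α * hnorm (x / s) (y / s) (z / s) (by positivity) (by positivity)
    (by positivity) (by rw [← add_div, ← add_div]; exact div_self hs.ne')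

theorem entropyKernel_cocycle (hf : IsSymmetricOnNonneg f)
    (heq : ∀ x y z : ℝ, 0 < x → 0 < y → 0 < z → f x y z = f x (y + z) 0 + entropyKernel α f y z)
    {u v w : ℝ} (hu : 0 < u) (hv : 0 < v) (hw : 0 < w) :
    entropyKernel α f u v + entropyKernel α f (u + v) w
      = entropyKernel α f u (v + w) + entropyKernel α f v w := by
  rw [entropyKernel_comm hf (by positivity) hw.le, entropyKernel_comm hf hv.le hw.le, add_comm v w]
  linear_combination (entropyKernel_exchange hf heq hu hw hv).symm

end EntropyKernel

/-- Solutions of the modified entropy equation, case α < 0. -/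
theorem stmt_11 (α : ℝ) (hα : α < 0) (f : ℝ → ℝ → ℝ → ℝ)
    (hsym : ∀ x y z : ℝ, 0 ≤ x → 0 ≤ y → 0 ≤ z → ∀ σ : Equiv.Perm (Fin 3),
      f x y z = f (![x, y, z] (σ 0)) (![x, y, z] (σ 1)) (![x, y, z] (σ 2)))
    (heq : ∀ x y z : ℝ, 0 < x → 0 < y → 0 < z →
      f x y z = f x (y + z) 0 + (y + z) ^ α * f 0 (y / (y + z)) (z / (y + z))) :
    ∃ (a : ℝ) (φ : ℝ → ℝ), ∀ x y z : ℝ, 0 < x → 0 < y → 0 < z →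
      f x y z = a * x ^ α + a * y ^ α + a * z ^ α + φ (x + y + z) := by
  obtain ⟨a, ha⟩ := exists_eq_of_symm_of_homogeneous_cocycle (Φ := entropyKernel α f)
    (by linarith) (fun u v hu hv => entropyKernel_comm hsym hu.le hv.le)
    (fun c u v hc hu hv => entropyKernel_mul hc (by positivity))
    (fun u v w hu hv hw => entropyKernel_cocycle hsym heq hu hv hw)
  have hsplit : ∀ x y z, 0 < x → 0 < y → 0 < z →
      f x y z = f x (y + z) 0 + a * (y ^ α + z ^ α - (y + z) ^ α) := fun x y z hx hy hz =>
    (heq x y z hx hy hz).trans (by rw [← ha y z hy hz]; rfl)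
  obtain ⟨φ, hφ⟩ := exists_eq_add_of_exchange (h := fun x w => f x w 0 - a * x ^ α - a * w ^ α)
    (fun x y z hx hy hz => by
      have := (hsplit x y z hx hy hz).symm.trans
        ((IsSymmetricOnNonneg.swap_left hsym hx.le hy.le hz.le).trans (hsplit y x z hy hx hz))
      linarith)
  refine ⟨a, φ, fun x y z hx hy hz => ?_⟩
  have := hφ x (y + z) hx (by positivity)
  rw [← add_assoc] at this
  rw [hsplit x y z hx hy hz, ← this]
  ring
end

section
/- Let α > 0, α ≠ 1, ε ≥ 0, and h : (0,1) → ℝ. Suppose there exist a, b ∈ ℝ with |h(x) − (a x^α + b(1−x)^α − b)| ≤ ε for all x ∈ (0,1), and |h(t) − h(1−t)| ≤ ε₂ for all t ∈ (0,1) with ε₂ ≥ 0. Then |a − b| ≤ 2ε + ε₂, and consequently |h(x) − (a x^α + a(1−x)^α − a)| ≤ 3ε + ε₂ for all x ∈ (0,1). -/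
open Set Filter Topology

/-- From an approximate solution form and approximate symmetry, a ≈ b. -/
theorem stmt_14 (α ε ε₂ a b : ℝ) (hα : 0 < α) (hα1 : α ≠ 1) (hε : 0 ≤ ε) (hε₂ : 0 ≤ ε₂)
    (h : ℝ → ℝ)
    (happrox : ∀ x ∈ Ioo (0 : ℝ) 1, |h x - (a * x ^ α + b * (1 - x) ^ α - b)| ≤ ε)
    (hsym : ∀ t ∈ Ioo (0 : ℝ) 1, |h t - h (1 - t)| ≤ ε₂) :
    |a - b| ≤ 2 * ε + ε₂ ∧
      ∀ x ∈ Ioo (0 : ℝ) 1, |h x - (a * x ^ α + a * (1 - x) ^ α - a)| ≤ 3 * ε + ε₂ := by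
  have key : ∀ x ∈ Ioo (0 : ℝ) 1, |a - b| * |x ^ α - (1 - x) ^ α| ≤ 2 * ε + ε₂ := by
    intro x hx
    have hx' : (1 - x) ∈ Ioo (0 : ℝ) 1 := ⟨by linarith [hx.2], by linarith [hx.1]⟩
    have h1 := happrox x hx
    have h2 := happrox (1 - x) hx'
    have h3 := hsym x hx
    have e1 : (a - b) * (x ^ α - (1 - x) ^ α) =
        ((a * x ^ α + b * (1 - x) ^ α - b) - h x) + (h x - h (1 - x)) +
          (h (1 - x) - (a * (1 - x) ^ α + b * (1 - (1 - x)) ^ α - b)) := by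
      ring_nf
    rw [← abs_mul, e1]
    have t1 : |(a * x ^ α + b * (1 - x) ^ α - b) - h x| ≤ ε := by
      rw [abs_sub_comm]; exact h1
    calc |((a * x ^ α + b * (1 - x) ^ α - b) - h x) + (h x - h (1 - x)) +
          (h (1 - x) - (a * (1 - x) ^ α + b * (1 - (1 - x)) ^ α - b))|
        ≤ |((a * x ^ α + b * (1 - x) ^ α - b) - h x) + (h x - h (1 - x))| +
          |(h (1 - x) - (a * (1 - x) ^ α + b * (1 - (1 - x)) ^ α - b))| := abs_add_le _ _
      _ ≤ |(a * x ^ α + b * (1 - x) ^ α - b) - h x| + |h x - h (1 - x)| +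
          |(h (1 - x) - (a * (1 - x) ^ α + b * (1 - (1 - x)) ^ α - b))| := by
            gcongr; exact abs_add_le _ _
      _ ≤ ε + ε₂ + ε := by gcongr
      _ = 2 * ε + ε₂ := by ring
  have hab : |a - b| ≤ 2 * ε + ε₂ := by
    haveI : (𝓝[Ioo (0 : ℝ) 1] (1 : ℝ)).NeBot := by
      rw [← mem_closure_iff_nhdsWithin_neBot, closure_Ioo one_ne_zero.symm]
      exact ⟨le_of_lt one_pos, le_refl 1⟩
    have c1 : ContinuousAt (fun x : ℝ => x ^ α) 1 :=
      Real.continuousAt_rpow_const 1 α (Or.inl one_ne_zero)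
    have c2 : ContinuousAt (fun x : ℝ => (1 - x) ^ α) 1 := by
      have : ContinuousAt (fun y : ℝ => y ^ α) ((fun x : ℝ => 1 - x) 1) := by
        simpa using Real.continuousAt_rpow_const 0 α (Or.inr hα.le)
      exact this.comp (by fun_prop)
    have cg : ContinuousAt (fun x : ℝ => |a - b| * |x ^ α - (1 - x) ^ α|) 1 := by
      exact ((c1.sub c2).abs).const_mul _
    have ht : Tendsto (fun x : ℝ => |a - b| * |x ^ α - (1 - x) ^ α|)
        (𝓝[Ioo (0 : ℝ) 1] 1) (𝓝 (|a - b|)) := by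
      have := cg.tendsto.mono_left (nhdsWithin_le_nhds (s := Ioo (0:ℝ) 1))
      simpa [Real.one_rpow, Real.zero_rpow (ne_of_gt hα)] using this
    exact le_of_tendsto ht (eventually_nhdsWithin_of_forall key)
  refine ⟨hab, fun x hx => ?_⟩
  have h1 := happrox x hx
  have hbase : (1 - x) ^ α ≤ 1 :=
    Real.rpow_le_one (by linarith [hx.2]) (by linarith [hx.1]) (le_of_lt hα)
  have hbase0 : 0 ≤ (1 - x) ^ α := Real.rpow_nonneg (by linarith [hx.2]) _
  have e2 : h x - (a * x ^ α + a * (1 - x) ^ α - a) =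
      (h x - (a * x ^ α + b * (1 - x) ^ α - b)) + (b - a) * ((1 - x) ^ α - 1) := by ring
  rw [e2]
  calc |(h x - (a * x ^ α + b * (1 - x) ^ α - b)) + (b - a) * ((1 - x) ^ α - 1)|
      ≤ |h x - (a * x ^ α + b * (1 - x) ^ α - b)| + |(b - a) * ((1 - x) ^ α - 1)| := abs_add_le _ _
    _ ≤ ε + |b - a| * 1 := by
        gcongr
        rw [abs_mul]
        have : |(1 - x) ^ α - 1| ≤ 1 := by rw [abs_le]; constructor <;> linarith
        exact mul_le_mul_of_nonneg_left this (abs_nonneg _)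
    _ ≤ ε + (2 * ε + ε₂) := by rw [abs_sub_comm] at hab; linarith
    _ = 3 * ε + ε₂ := by ring
end

section
/- Let ε ≥ 0 and l : (0,1) → ℝ be a logarithmic function (l(xy) = l(x) + l(y) whenever x, y, xy ∈ (0,1)) satisfying |l(x) − l(1−x)| ≤ ε for all x ∈ (0,1). Then the extension of l to a logarithmic function on ℝ₊₊ via l(p) = l(x) − l(1−x) for x = p/(p+1) is bounded by ε, hence l is identically zero on (0,1). -/
open Set

def IsLogarithmicOnUnitIoo (l : ℝ → ℝ) : Prop :=
  ∀ x y : ℝ, x ∈ Ioo (0 : ℝ) 1 → y ∈ Ioo (0 : ℝ) 1 → x * y ∈ Ioo (0 : ℝ) 1 → l (x * y) = l x + l y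

lemma div_add_one_mem_Ioo {p : ℝ} (hp : 0 < p) : p / (p + 1) ∈ Ioo (0 : ℝ) 1 :=
  ⟨by positivity, (div_lt_one (by linarith)).2 (by linarith)⟩

lemma pow_succ_mem_Ioo {x : ℝ} (hx : x ∈ Ioo (0 : ℝ) 1) (n : ℕ) : x ^ (n + 1) ∈ Ioo (0 : ℝ) 1 :=
  ⟨pow_pos hx.1 _, pow_lt_one₀ hx.1.le hx.2 n.succ_ne_zero⟩

namespace IsLogarithmicOnUnitIoo

variable {l : ℝ → ℝ}

lemma map_pow_succ (hl : IsLogarithmicOnUnitIoo l) {x : ℝ} (hx : x ∈ Ioo (0 : ℝ) 1) (n : ℕ) :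
    l (x ^ (n + 1)) = (n + 1) * l x := by
  induction n with
  | zero => simp
  | succ k ih =>
    rw [pow_succ, hl _ x (pow_succ_mem_Ioo hx k) hx (pow_succ_mem_Ioo hx (k + 1)), ih]
    push_cast
    ring

/-- With `x = p / (p + 1)` we have `1 - x = 1 / (p + 1)` and `p * (1 - x) = x`; the right-hand
side is the paper's extension of `l` to all `p > 0`. -/
lemma eq_sub_one_sub (hl : IsLogarithmicOnUnitIoo l) {p : ℝ} (hp : p ∈ Ioo (0 : ℝ) 1) :
    l p = l (p / (p + 1)) - l (1 - p / (p + 1)) := by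
  have hp0 : 0 < p := hp.1
  have hcompl : 1 - p / (p + 1) = 1 / (p + 1) := by field_simp; ring
  have hcompl_mem : 1 / (p + 1) ∈ Ioo (0 : ℝ) 1 :=
    ⟨by positivity, (div_lt_one (by linarith)).2 (by linarith)⟩
  have hprod : p * (1 / (p + 1)) = p / (p + 1) := by ring
  rw [hcompl, ← hprod, hl p _ hp hcompl_mem (hprod ▸ div_add_one_mem_Ioo hp0)]
  ring

lemma eq_zero_of_abs_le (hl : IsLogarithmicOnUnitIoo l) {C : ℝ}
    (hC : ∀ x ∈ Ioo (0 : ℝ) 1, |l x| ≤ C) {x : ℝ} (hx : x ∈ Ioo (0 : ℝ) 1) : l x = 0 := by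
  by_contra hne
  have hpos : 0 < |l x| := abs_pos.2 hne
  obtain ⟨n, hn⟩ := exists_nat_gt (C / |l x|)
  have hgrow : ((n : ℝ) + 1) * |l x| ≤ C := by
    simpa [hl.map_pow_succ hx n, abs_mul, abs_of_nonneg (by positivity : (0 : ℝ) ≤ n + 1)]
      using hC _ (pow_succ_mem_Ioo hx n)
  rw [div_lt_iff₀ hpos] at hn
  nlinarith

end IsLogarithmicOnUnitIoo

theorem stmt_16_general (ε : ℝ) (l : ℝ → ℝ)
    (hlog : ∀ x y : ℝ, x ∈ Ioo (0 : ℝ) 1 → y ∈ Ioo (0 : ℝ) 1 →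
      x * y ∈ Ioo (0 : ℝ) 1 → l (x * y) = l x + l y)
    (hsym : ∀ x ∈ Ioo (0 : ℝ) 1, |l x - l (1 - x)| ≤ ε) :
    (∀ p : ℝ, 0 < p → |l (p / (p + 1)) - l (1 - p / (p + 1))| ≤ ε) ∧
      ∀ x ∈ Ioo (0 : ℝ) 1, l x = 0 := by
  have hl : IsLogarithmicOnUnitIoo l := hlog
  have hext (p : ℝ) (hp : 0 < p) : |l (p / (p + 1)) - l (1 - p / (p + 1))| ≤ ε :=
    hsym _ (div_add_one_mem_Ioo hp)
  have hbound (p : ℝ) (hp : p ∈ Ioo (0 : ℝ) 1) : |l p| ≤ ε :=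
    hl.eq_sub_one_sub hp ▸ hext p hp.1
  exact ⟨hext, fun x hx => hl.eq_zero_of_abs_le hbound hx⟩

/-- A logarithmic function on (0,1) that is approximately symmetric to 1/2 is
bounded (via its extension to the positive reals), hence identically zero. -/
theorem stmt_16 (ε : ℝ) (hε : 0 ≤ ε) (l : ℝ → ℝ)
    (hlog : ∀ x y : ℝ, x ∈ Ioo (0 : ℝ) 1 → y ∈ Ioo (0 : ℝ) 1 →
      x * y ∈ Ioo (0 : ℝ) 1 → l (x * y) = l x + l y)
    (hsym : ∀ x ∈ Ioo (0 : ℝ) 1, |l x - l (1 - x)| ≤ ε) :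
    (∀ p : ℝ, 0 < p → |l (p / (p + 1)) - l (1 - p / (p + 1))| ≤ ε) ∧
      ∀ x ∈ Ioo (0 : ℝ) 1, l x = 0 :=
  stmt_16_general ε l hlog hsym
end
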